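/- Let a, b be arbitrary reals, η ∈ D_r a local configuration, l ≥ 1 an integer, and (x_1,…,x_l) ∈ C_l(l) an l-tuple of vertices whose balls B(x_1,r),…,B(x_l,r) form l distinct equivalence classes for the connectivity relation. Then μ_{a,b}(I_{x_1}^η = 1, …, I_{x_l}^η = 1) = E_{a,b}[ ∏_{i=1}^l g_i ], where g_i is the random variable σ ↦ μ_{a,b}(I_{x_i}^η = 1 | σ_{δB(x_i,r)}), i.e. the events I_{x_i}^η = 1 factor after conditioning each ball on its own boundary. -/

import Mathlib

open scoped ENNReal BigOperators
open Filter

namespace Ising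

noncomputable section

/-- The `L_p` norm (`1 ≤ p ≤ ∞`) of an integer vector, via the `PiLp` norm on `ℝ^d`. -/
def lpNorm (p : ℝ≥0∞) [Fact (1 ≤ p)] {d : ℕ} (z : Fin d → ℤ) : ℝ :=
  ‖(WithLp.equiv p (Fin d → ℝ)).symm (fun i => (z i : ℝ))‖

lemma lpNorm_neg (p : ℝ≥0∞) [Fact (1 ≤ p)] {d : ℕ} (z : Fin d → ℤ) :
    lpNorm p (fun i => -(z i)) = lpNorm p z := by
  unfold lpNorm
  have h : ((WithLp.equiv p (Fin d → ℝ)).symm (fun i => ((-(z i) : ℤ) : ℝ)))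
      = -((WithLp.equiv p (Fin d → ℝ)).symm fun i => ((z i : ℤ) : ℝ)) := by
    have : (fun i => ((-(z i) : ℤ) : ℝ)) = -(fun i => ((z i : ℤ) : ℝ)) := by
      funext i; simp
    rw [this]; rfl
  rw [h, norm_neg]

/-- Vertex set of the `d`-dimensional lattice torus of size `n`:
`{0, …, n-1}^d` with componentwise arithmetic modulo `n`. -/
abbrev Vtx (d n : ℕ) := Fin d → ZMod n

/-- Configurations: a spin (`true` = `+1`, `false` = `-1`) at each vertex. -/
abbrev Conf (d n : ℕ) := Vtx d n → Bool

/-- The spin value (`±1`) of a Boolean. -/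
def spin (s : Bool) : ℝ := if s then 1 else -1

/-- The lattice torus `G_n`: distinct vertices `x, y` are adjacent iff `y - x`
(componentwise modulo `n`) admits an integer representative `z` with `‖z‖_p ≤ ρ`. -/
def torus (d ρ : ℕ) (p : ℝ≥0∞) [Fact (1 ≤ p)] (n : ℕ) : SimpleGraph (Vtx d n) where
  Adj x y := x ≠ y ∧ ∃ z : Fin d → ℤ,
    (∀ i, ((z i : ZMod n) = y i - x i)) ∧ lpNorm p z ≤ (ρ : ℝ)
  symm := by
    constructor
    rintro x y ⟨hxy, z, hz, hn⟩
    refine ⟨hxy.symm, fun i => -(z i), fun i => ?_, by rw [lpNorm_neg]; exact hn⟩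
    push_cast
    rw [hz i]; ring
  loopless := ⟨fun x h => h.1 rfl⟩

/-- The corresponding (infinite) lattice graph on `ℤ^d`, used as a reference to define
local configurations: distinct `x, y` are adjacent iff `‖y - x‖_p ≤ ρ`. -/
def latticeZ (d ρ : ℕ) (p : ℝ≥0∞) [Fact (1 ≤ p)] : SimpleGraph (Fin d → ℤ) where
  Adj x y := x ≠ y ∧ lpNorm p (fun i => y i - x i) ≤ (ρ : ℝ)
  symm := by
    constructor
    rintro x y ⟨hxy, hn⟩
    refine ⟨hxy.symm, ?_⟩
    have h : (fun i => x i - y i) = (fun i => -(y i - x i)) := by funext i; ring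
    rw [h, lpNorm_neg]; exact hn
  loopless := ⟨fun x h => h.1 rfl⟩

/-- The ball `B(x,r)` of center `x` and radius `r` for the graph distance. -/
def gball {V : Type*} (G : SimpleGraph V) (x : V) (r : ℕ) : Set V :=
  {y | G.Reachable x y ∧ G.dist x y ≤ r}

/-- The reference ball `B(0,r)` (in `ℤ^d`). -/
def refBall (d ρ : ℕ) (p : ℝ≥0∞) [Fact (1 ≤ p)] (r : ℕ) : Set (Fin d → ℤ) :=
  gball (latticeZ d ρ p) 0 r

/-- A local configuration of radius `r`: an element of `D_r = {-1,+1}^{B(0,r)}`. -/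
abbrev LocalConfig (d ρ : ℕ) (p : ℝ≥0∞) [Fact (1 ≤ p)] (r : ℕ) :=
  ↥(refBall d ρ p r) → Bool

/-- `k(η)`: the number of positive vertices of a local configuration `η`. -/
def kOf (d ρ : ℕ) (p : ℝ≥0∞) [Fact (1 ≤ p)] (r : ℕ) (η : LocalConfig d ρ p r) : ℕ :=
  Set.ncard {v : ↥(refBall d ρ p r) | η v = true}

/-- The common degree of the vertices (number of neighbors of `0` in the lattice). -/
def degZ (d ρ : ℕ) (p : ℝ≥0∞) [Fact (1 ≤ p)] : ℕ :=
  Set.ncard {z : Fin d → ℤ | (latticeZ d ρ p).Adj 0 z}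

/-- The perimeter `γ(η) = V·k(η) - 2·#{edges with both endpoints positive}`; the
number of ordered adjacent pairs of positive vertices is twice the number of such edges. -/
def perim (d ρ : ℕ) (p : ℝ≥0∞) [Fact (1 ≤ p)] (r : ℕ) (η : LocalConfig d ρ p r) : ℕ :=
  degZ d ρ p * kOf d ρ p r η -
    Set.ncard {q : ↥(refBall d ρ p r) × ↥(refBall d ρ p r) |
      (latticeZ d ρ p).Adj q.1.1 q.2.1 ∧ η q.1 = true ∧ η q.2 = true}

/-- `η` is clean if every vertex at graph distance exactly `r` from `0` is negative. -/
def Clean (d ρ : ℕ) (p : ℝ≥0∞) [Fact (1 ≤ p)] (r : ℕ) (η : LocalConfig d ρ p r) : Prop :=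
  ∀ v : ↥(refBall d ρ p r), (latticeZ d ρ p).dist 0 v.1 = r → η v = false

/-- The translate `η_x` of `η` occurs at `x` in the configuration `σ`. -/
def occursAt (d ρ : ℕ) (p : ℝ≥0∞) [Fact (1 ≤ p)] (r n : ℕ) (η : LocalConfig d ρ p r)
    (x : Vtx d n) (σ : Conf d n) : Prop :=
  ∀ v : ↥(refBall d ρ p r), σ (x + fun i => ((v.1 i : ZMod n))) = η v

/-- The indicator `I_x^η` (as a real number). -/
def occInd (d ρ : ℕ) (p : ℝ≥0∞) [Fact (1 ≤ p)] (r n : ℕ) (η : LocalConfig d ρ p r)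
    (x : Vtx d n) (σ : Conf d n) : ℝ := by
  classical exact if occursAt d ρ p r n η x σ then 1 else 0

/-- `X_n(η) = Σ_x I_x^η`: the number of copies of `η` in `G_n`. -/
def Xcount (d ρ : ℕ) (p : ℝ≥0∞) [Fact (1 ≤ p)] (r n : ℕ) (η : LocalConfig d ρ p r)
    (σ : Conf d n) : ℕ :=
  Set.ncard {x : Vtx d n | occursAt d ρ p r n η x σ}

/-- The interaction term `Σ_{{x,y} ∈ E_n} σ(x)σ(y)`. -/
def pairSum (d ρ : ℕ) (p : ℝ≥0∞) [Fact (1 ≤ p)] (n : ℕ) (σ : Conf d n) : ℝ :=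
  ∑' e : ↥(torus d ρ p n).edgeSet,
    Sym2.lift ⟨fun x y => spin (σ x) * spin (σ y), fun _ _ => mul_comm _ _⟩
      (e : Sym2 (Vtx d n))

/-- The Hamiltonian `a Σ_x σ(x) + b Σ_{{x,y} ∈ E_n} σ(x)σ(y)`. -/
def hamiltonian (d ρ : ℕ) (p : ℝ≥0∞) [Fact (1 ≤ p)] (n : ℕ) (a b : ℝ) (σ : Conf d n) : ℝ :=
  a * (∑' x : Vtx d n, spin (σ x)) + b * pairSum d ρ p n σ

/-- The (unnormalized) Gibbs weight of a configuration. -/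
def weight (d ρ : ℕ) (p : ℝ≥0∞) [Fact (1 ≤ p)] (n : ℕ) (a b : ℝ) (σ : Conf d n) : ℝ :=
  Real.exp (hamiltonian d ρ p n a b σ)

/-- The partition function `Z_{a,b}`. -/
def partZ (d ρ : ℕ) (p : ℝ≥0∞) [Fact (1 ≤ p)] (n : ℕ) (a b : ℝ) : ℝ :=
  ∑' σ : Conf d n, weight d ρ p n a b σ

/-- The Ising (Gibbs) probability `μ_{a,b}(A)` of an event `A ⊆ X_n`. -/
def prob (d ρ : ℕ) (p : ℝ≥0∞) [Fact (1 ≤ p)] (n : ℕ) (a b : ℝ) (A : Set (Conf d n)) : ℝ :=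
  (∑' σ : ↥A, weight d ρ p n a b (σ : Conf d n)) / partZ d ρ p n a b

/-- The expectation `E_{a,b}[f]`. -/
def expect (d ρ : ℕ) (p : ℝ≥0∞) [Fact (1 ≤ p)] (n : ℕ) (a b : ℝ) (f : Conf d n → ℝ) : ℝ :=
  (∑' σ : Conf d n, weight d ρ p n a b σ * f σ) / partZ d ρ p n a b

/-- The variance `Var_{a,b}[f]`. -/
def varE (d ρ : ℕ) (p : ℝ≥0∞) [Fact (1 ≤ p)] (n : ℕ) (a b : ℝ) (f : Conf d n → ℝ) : ℝ :=
  expect d ρ p n a b (fun σ => (f σ - expect d ρ p n a b f) ^ 2)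

/-- The event `{I_x^η = 1}`. -/
def event (d ρ : ℕ) (p : ℝ≥0∞) [Fact (1 ≤ p)] (r n : ℕ) (η : LocalConfig d ρ p r)
    (x : Vtx d n) : Set (Conf d n) :=
  {σ | occursAt d ρ p r n η x σ}

/-- The event that a configuration agrees with `σ₀` on `W`. -/
def agreeOn (d n : ℕ) (W : Set (Vtx d n)) (σ₀ : Conf d n) : Set (Conf d n) :=
  {τ | ∀ x ∈ W, τ x = σ₀ x}

/-- The conditional probability `μ_{a,b}(A | σ₀ on W)`. -/
def condProb (d ρ : ℕ) (p : ℝ≥0∞) [Fact (1 ≤ p)] (n : ℕ) (a b : ℝ) (A : Set (Conf d n))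
    (W : Set (Vtx d n)) (σ₀ : Conf d n) : ℝ :=
  prob d ρ p n a b (A ∩ agreeOn d n W σ₀) / prob d ρ p n a b (agreeOn d n W σ₀)

/-- The exterior boundary `δV` of a set of vertices of the torus. -/
def boundary (d ρ : ℕ) (p : ℝ≥0∞) [Fact (1 ≤ p)] (n : ℕ) (V : Set (Vtx d n)) :
    Set (Vtx d n) :=
  {y | y ∉ V ∧ ∃ x ∈ V, (torus d ρ p n).Adj x y}

/-- The ball `B(x,R)` in the torus. -/
def tball (d ρ : ℕ) (p : ℝ≥0∞) [Fact (1 ≤ p)] (n : ℕ) (x : Vtx d n) (R : ℕ) :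
    Set (Vtx d n) :=
  gball (torus d ρ p n) x R

/-- The distribution (probability mass function on `ℕ`) of an integer-valued observable. -/
def lawOf (d ρ : ℕ) (p : ℝ≥0∞) [Fact (1 ≤ p)] (n : ℕ) (a b : ℝ) (X : Conf d n → ℕ) :
    ℕ → ℝ :=
  fun m => prob d ρ p n a b {σ | X σ = m}

/-- The distribution on `ℕ` of a real-valued (integer-valued in fact) observable. -/
def lawR (d ρ : ℕ) (p : ℝ≥0∞) [Fact (1 ≤ p)] (n : ℕ) (a b : ℝ) (X : Conf d n → ℝ) :
    ℕ → ℝ :=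
  fun m => prob d ρ p n a b {σ | X σ = (m : ℝ)}

/-- The Poisson distribution with parameter `θ`, as a pmf on `ℕ`. -/
def poissonPMF (θ : ℝ) : ℕ → ℝ :=
  fun m => Real.exp (-θ) * θ ^ m / (Nat.factorial m : ℝ)

/-- Total variation distance between two distributions on `ℕ`:
`d_TV(μ,ν) = sup_A |μ(A) - ν(A)|`. -/
def dTV (f g : ℕ → ℝ) : ℝ :=
  ⨆ A : Set ℕ, |(∑' m : ↥A, f (m : ℕ)) - ∑' m : ↥A, g (m : ℕ)|

/-- The clean extension `η̊ ∈ D_{r+1}` of `η ∈ D_r`: it agrees with `η` on `B(0,r)` and is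
negative at every vertex at distance exactly `r+1` from `0`. -/
def ringExt (d ρ : ℕ) (p : ℝ≥0∞) [Fact (1 ≤ p)] (r : ℕ) (η : LocalConfig d ρ p r) :
    LocalConfig d ρ p (r + 1) := by
  classical exact fun v => if h : v.1 ∈ refBall d ρ p r then η ⟨v.1, h⟩ else false

/-- `D_r(η) = {η' ∈ D_r : V_+(η') ⊇ V_+(η)}`. -/
def Dfam (d ρ : ℕ) (p : ℝ≥0∞) [Fact (1 ≤ p)] (r : ℕ) (η : LocalConfig d ρ p r) :
    Set (LocalConfig d ρ p r) :=
  {η' | ∀ v, η v = true → η' v = true}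

/-- `Ī_x^η = Σ_{η' ∈ D_r(η)} I_x^{η'}`. -/
def barInd (d ρ : ℕ) (p : ℝ≥0∞) [Fact (1 ≤ p)] (r n : ℕ) (η : LocalConfig d ρ p r)
    (x : Vtx d n) (σ : Conf d n) : ℝ :=
  ∑' η' : ↥(Dfam d ρ p r η), occInd d ρ p r n (η' : LocalConfig d ρ p r) x σ

/-- `X̄_n(η) = Σ_x Ī_x^η`. -/
def Xbar (d ρ : ℕ) (p : ℝ≥0∞) [Fact (1 ≤ p)] (r n : ℕ) (η : LocalConfig d ρ p r)
    (σ : Conf d n) : ℝ :=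
  ∑' x : Vtx d n, barInd d ρ p r n η x σ

/-- The closed neighbourhood `B̄ = B ∪ δB` of a torus ball. -/
def cball (d ρ : ℕ) (p : ℝ≥0∞) [Fact (1 ≤ p)] (n : ℕ) (x : Vtx d n) (r : ℕ) :
    Set (Vtx d n) :=
  tball d ρ p n x r ∪ boundary d ρ p n (tball d ρ p n x r)

/-- One step of the connectivity relation between the balls of radius `r` centered at the
entries of a tuple: `B̄(x_i) ∩ B(x_j) ≠ ∅`. -/
def stepRel (d ρ : ℕ) (p : ℝ≥0∞) [Fact (1 ≤ p)] (n r : ℕ) {l : ℕ} (x : Fin l → Vtx d n)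
    (i j : Fin l) : Prop :=
  (cball d ρ p n (x i) r ∩ tball d ρ p n (x j) r).Nonempty

/-- The number of equivalence classes, for the connectivity relation, of the set of balls
`{B(x_1,r), …, B(x_l,r)}`. -/
def numClasses (d ρ : ℕ) (p : ℝ≥0∞) [Fact (1 ≤ p)] (n r : ℕ) {l : ℕ}
    (x : Fin l → Vtx d n) : ℕ :=
  Set.ncard (Set.range fun i : Fin l =>
    {j : Fin l | Relation.EqvGen (stepRel d ρ p n r x) i j})

/-- `C_l(s)`: the set of `l`-tuples of vertices whose set of balls of radius `r` is composed
of exactly `s` equivalence classes for the connectivity relation. -/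
def tupleClass (d ρ : ℕ) (p : ℝ≥0∞) [Fact (1 ≤ p)] (n r l s : ℕ) :
    Set (Fin l → Vtx d n) :=
  {x | numClasses d ρ p n r x = s}

/-!
The Ising weight is the product of a factor depending only on the spins in `B ∪ δB` and a factor
depending only on the spins off `B`; hence conditioning an event inside `B` on all the spins
outside `B` only uses the spins in `δB` (spatial Markov property). For a tuple in `C_l(l)` no
closed ball `B̄(x_i, r)` meets another ball `B(x_j, r)`, so the indicators `I_{x_i}^η` can be
replaced one at a time by their conditional probabilities given `δB(x_i, r)`: the other factors
only see spins outside `B(x_i, r)`, and the tower property applies.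
-/

section Conditioning

lemma dependsOn_prod {ι κ : Type*} {α : κ → Type*} (s : Finset ι) {U : Set κ}
    {F : ι → (Π k, α k) → ℝ} (hF : ∀ i ∈ s, DependsOn (F i) U) :
    DependsOn (fun σ => ∏ i ∈ s, F i σ) U :=
  fun _ _ h => Finset.prod_congr rfl fun i hi => hF i hi h

lemma indicator_eq_mul_indicator_one {α : Type*} (s : Set α) (f : α → ℝ) (a : α) :
    s.indicator f a = f a * s.indicator 1 a := by
  simpa using Set.indicator_mul_right s f 1 (i := a)

variable {V S : Type*} [Fintype V] [DecidableEq V] [Fintype S]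

def fiber (U : Set V) (σ : V → S) : Finset (V → S) := by
  classical exact Finset.univ.filter fun τ => ∀ v ∈ U, τ v = σ v

variable {U : Set V} {σ τ : V → S}

lemma mem_fiber : τ ∈ fiber U σ ↔ ∀ v ∈ U, τ v = σ v := by
  classical simp [fiber]

lemma mem_fiber_self : σ ∈ fiber U σ := mem_fiber.2 fun _ _ => rfl

lemma mem_fiber_comm : τ ∈ fiber U σ ↔ σ ∈ fiber U τ := by
  simp only [mem_fiber, eq_comm]

lemma fiber_eq_of_mem (h : τ ∈ fiber U σ) : fiber U τ = fiber U σ := by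
  ext ζ
  simp only [mem_fiber] at h ⊢
  exact forall₂_congr fun v hv => by rw [h v hv]

/-- The conditional expectation of `φ` given the spins on `U`, for the probability proportional
to `w`. -/
def condExpOn (w : (V → S) → ℝ) (U : Set V) (φ : (V → S) → ℝ) (σ : V → S) : ℝ :=
  (∑ τ ∈ fiber U σ, w τ * φ τ) / ∑ τ ∈ fiber U σ, w τ

variable {w : (V → S) → ℝ} {φ F : (V → S) → ℝ}

lemma sum_fiber_pos (hw : ∀ σ, 0 < w σ) (U : Set V) (σ : V → S) :
    0 < ∑ τ ∈ fiber U σ, w τ :=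
  Finset.sum_pos (fun τ _ => hw τ) ⟨σ, mem_fiber_self⟩

lemma dependsOn_condExpOn (w : (V → S) → ℝ) (U : Set V) (φ : (V → S) → ℝ) :
    DependsOn (condExpOn w U φ) U := fun σ σ' h => by
  rw [condExpOn, condExpOn, fiber_eq_of_mem (mem_fiber.2 fun v hv => (h v hv).symm)]

lemma condExpOn_of_dependsOn (hw : ∀ σ, 0 < w σ) (hφ : DependsOn φ U) :
    condExpOn w U φ = φ := by
  funext σ
  rw [condExpOn, Finset.sum_congr rfl fun τ hτ => by rw [hφ (mem_fiber.1 hτ)],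
    ← Finset.sum_mul, mul_div_cancel_left₀ _ (sum_fiber_pos hw U σ).ne']

theorem sum_mul_condExpOn_mul (hw : ∀ σ, 0 < w σ) (φ : (V → S) → ℝ) (hF : DependsOn F U) :
    ∑ σ, w σ * condExpOn w U φ σ * F σ = ∑ σ, w σ * φ σ * F σ := by
  set D : (V → S) → ℝ := fun σ => ∑ τ ∈ fiber U σ, w τ
  calc ∑ σ, w σ * condExpOn w U φ σ * F σ
      = ∑ σ, ∑ τ ∈ fiber U σ, w σ * (w τ * φ τ * F τ / D τ) := by
        refine Finset.sum_congr rfl fun σ _ => ?_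
        have hD : ∀ τ ∈ fiber U σ, D τ = D σ := fun τ hτ => by
          simp only [D, fiber_eq_of_mem hτ]
        rw [Finset.sum_congr rfl fun τ hτ => by rw [hD τ hτ, hF (mem_fiber.1 hτ)],
          ← Finset.mul_sum, ← Finset.sum_div, ← Finset.sum_mul, condExpOn]
        ring
    _ = ∑ τ, ∑ σ ∈ fiber U τ, w σ * (w τ * φ τ * F τ / D τ) :=
        Finset.sum_comm' fun σ τ => by simp [mem_fiber_comm]
    _ = ∑ τ, w τ * φ τ * F τ := by
        refine Finset.sum_congr rfl fun τ _ => ?_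
        rw [← Finset.sum_mul, mul_div_cancel₀ _ (sum_fiber_pos hw U τ).ne']

theorem condExpOn_condExpOn {W : Set V} (hw : ∀ σ, 0 < w σ) (hWU : W ⊆ U) :
    condExpOn w W (condExpOn w U φ) = condExpOn w W φ := by
  classical
  funext σ
  have hsum : ∀ ψ : (V → S) → ℝ, ∑ τ ∈ fiber W σ, w τ * ψ τ
      = ∑ τ, w τ * ψ τ * if τ ∈ fiber W σ then 1 else 0 := fun ψ => by
    simp [Finset.sum_ite_mem]
  have hF : DependsOn (fun τ => if τ ∈ fiber W σ then (1 : ℝ) else 0) U := fun τ τ' h => by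
    simp only [mem_fiber]
    exact if_congr (forall₂_congr fun v hv => by rw [h v (hWU hv)]) rfl rfl
  rw [condExpOn, condExpOn, hsum, hsum, sum_mul_condExpOn_mul hw φ hF]

lemma dependsOn_sum_fiber_compl {B W : Set V} {h : (V → S) → ℝ} (hh : DependsOn h (B ∪ W)) :
    DependsOn (fun σ => ∑ τ ∈ fiber Bᶜ σ, h τ) W := by
  classical
  intro σ σ' hσ
  refine Finset.sum_nbij' (fun τ => B.piecewise τ σ') (fun τ => B.piecewise τ σ)
    ?_ ?_ ?_ ?_ ?_ <;> simp only [mem_fiber]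
  · intro τ _ v hv
    exact Set.piecewise_eq_of_notMem _ _ _ hv
  · intro τ _ v hv
    exact Set.piecewise_eq_of_notMem _ _ _ hv
  · intro τ hτ
    funext v
    by_cases hv : v ∈ B <;> simp [Set.piecewise, hv, hτ v]
  · intro τ hτ
    funext v
    by_cases hv : v ∈ B <;> simp [Set.piecewise, hv, hτ v]
  · intro τ hτ
    refine hh fun v hv => ?_
    by_cases hvB : v ∈ B
    · simp [Set.piecewise, hvB]
    · simp [Set.piecewise, hvB, hτ v hvB, hσ v (hv.resolve_left hvB)]

section Markov

variable {B W : Set V} {f g : (V → S) → ℝ}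

/-- The spatial Markov property: the factor `g` cancels from the conditional expectation given
`Bᶜ`, and what remains only sees the spins in `B ∪ W`. -/
theorem dependsOn_condExpOn_compl (hw : ∀ σ, 0 < w σ) (hwfg : w = f * g)
    (hf : DependsOn f (B ∪ W)) (hg : DependsOn g Bᶜ) (hφ : DependsOn φ B) :
    DependsOn (condExpOn w Bᶜ φ) W := by
  have hfφ : DependsOn (fun τ => f τ * φ τ) (B ∪ W) := fun τ τ' h => by
    show f τ * φ τ = f τ' * φ τ'
    rw [hf h, hφ fun v hv => h v (Or.inl hv)]
  have hcond : condExpOn w Bᶜ φ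
      = fun σ => (∑ τ ∈ fiber Bᶜ σ, f τ * φ τ) / ∑ τ ∈ fiber Bᶜ σ, f τ := by
    funext σ
    have hgσ : g σ ≠ 0 := right_ne_zero_of_mul (hwfg ▸ (hw σ).ne' : (f * g) σ ≠ 0)
    have hgτ : ∀ τ ∈ fiber Bᶜ σ, g τ = g σ := fun τ hτ => hg (mem_fiber.1 hτ)
    have hfactor : ∀ h : (V → S) → ℝ,
        ∑ τ ∈ fiber Bᶜ σ, w τ * h τ = (∑ τ ∈ fiber Bᶜ σ, f τ * h τ) * g σ := fun h => by
      rw [Finset.sum_mul]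
      refine Finset.sum_congr rfl fun τ hτ => ?_
      rw [hwfg, Pi.mul_apply, hgτ τ hτ]
      ring
    have hD := hfactor 1
    simp only [Pi.one_apply, mul_one] at hD
    rw [condExpOn, hfactor, hD, mul_div_mul_right _ _ hgσ]
  rw [hcond]
  exact fun σ σ' h =>
    congrArg₂ (· / ·) (dependsOn_sum_fiber_compl hfφ h) (dependsOn_sum_fiber_compl hf h)

theorem condExpOn_eq_condExpOn_compl (hw : ∀ σ, 0 < w σ) (hwfg : w = f * g)
    (hf : DependsOn f (B ∪ W)) (hg : DependsOn g Bᶜ) (hWB : W ⊆ Bᶜ) (hφ : DependsOn φ B) :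
    condExpOn w W φ = condExpOn w Bᶜ φ :=
  calc condExpOn w W φ = condExpOn w W (condExpOn w Bᶜ φ) := (condExpOn_condExpOn hw hWB).symm
    _ = condExpOn w Bᶜ φ :=
        condExpOn_of_dependsOn hw (dependsOn_condExpOn_compl hw hwfg hf hg hφ)

theorem sum_mul_condExpOn_mul_of_factorization (hw : ∀ σ, 0 < w σ) (hwfg : w = f * g)
    (hf : DependsOn f (B ∪ W)) (hg : DependsOn g Bᶜ) (hWB : W ⊆ Bᶜ) (hφ : DependsOn φ B)
    (hF : DependsOn F Bᶜ) :
    ∑ σ, w σ * condExpOn w W φ σ * F σ = ∑ σ, w σ * φ σ * F σ := by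
  rw [condExpOn_eq_condExpOn_compl hw hwfg hf hg hWB hφ, sum_mul_condExpOn_mul hw φ hF]

end Markov

theorem sum_mul_prod_condExpOn {ι : Type*} [Fintype ι] [DecidableEq ι] {B W : ι → Set V}
    {φ : ι → (V → S) → ℝ} (hw : ∀ σ, 0 < w σ)
    (hfac : ∀ i, ∃ f g : (V → S) → ℝ,
      w = f * g ∧ DependsOn f (B i ∪ W i) ∧ DependsOn g (B i)ᶜ)
    (hWB : ∀ i, W i ⊆ (B i)ᶜ) (hsep : Pairwise fun i j => Disjoint (B i ∪ W i) (B j))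
    (hφ : ∀ i, DependsOn (φ i) (B i)) :
    ∑ σ, w σ * ∏ i, condExpOn w (W i) (φ i) σ = ∑ σ, w σ * ∏ i, φ i σ := by
  set ψ : ι → (V → S) → ℝ := fun i => condExpOn w (W i) (φ i)
  have hcompl : ∀ {i j}, i ≠ j → B j ∪ W j ⊆ (B i)ᶜ := fun hij =>
    Set.subset_compl_iff_disjoint_right.2 (hsep hij.symm)
  suffices key : ∀ s : Finset ι,
      ∑ σ, w σ * ((∏ i ∈ s, ψ i σ) * ∏ i ∈ sᶜ, φ i σ) = ∑ σ, w σ * ∏ i, φ i σ by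
    simpa using key Finset.univ
  intro s
  induction s using Finset.induction_on with
  | empty => simp
  | @insert i s hi ih =>
    obtain ⟨f, g, hwfg, hf, hg⟩ := hfac i
    set F : (V → S) → ℝ := fun σ => (∏ j ∈ s, ψ j σ) * ∏ j ∈ (insert i s)ᶜ, φ j σ
    have hF : DependsOn F (B i)ᶜ := by
      refine fun σ σ' h => congrArg₂ (· * ·) ?_ ?_
      · refine dependsOn_prod s (fun j hj => ?_) h
        have hij : i ≠ j := fun e => hi (e ▸ hj)
        exact (dependsOn_condExpOn w (W j) (φ j)).mono
          (Set.subset_union_right.trans (hcompl hij))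
      · refine dependsOn_prod _ (fun j hj => ?_) h
        have hij : i ≠ j := fun e => Finset.mem_compl.1 hj (e ▸ Finset.mem_insert_self i s)
        exact (hφ j).mono (Set.subset_union_left.trans (hcompl hij))
    have hsplit : ∀ σ, ∏ j ∈ sᶜ, φ j σ = φ i σ * ∏ j ∈ (insert i s)ᶜ, φ j σ := fun σ => by
      rw [Finset.compl_insert, Finset.mul_prod_erase _ (fun j => φ j σ) (Finset.mem_compl.2 hi)]
    calc ∑ σ, w σ * ((∏ j ∈ insert i s, ψ j σ) * ∏ j ∈ (insert i s)ᶜ, φ j σ)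
        = ∑ σ, w σ * ψ i σ * F σ := by
          simp only [Finset.prod_insert hi, F, mul_assoc]
      _ = ∑ σ, w σ * φ i σ * F σ :=
          sum_mul_condExpOn_mul_of_factorization hw hwfg hf hg (hWB i) (hφ i) hF
      _ = ∑ σ, w σ * ((∏ j ∈ s, ψ j σ) * ∏ j ∈ sᶜ, φ j σ) := by
          simp only [hsplit, F]
          congr 1; funext σ; ring
      _ = ∑ σ, w σ * ∏ i, φ i σ := ih

end Conditioning

section Energy

def edgeEnergy {V : Type*} (σ : V → Bool) : Sym2 V → ℝ :=
  Sym2.lift ⟨fun x y => spin (σ x) * spin (σ y), fun _ _ => mul_comm _ _⟩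

variable {V : Type*} (G : SimpleGraph V)

lemma edgeEnergy_congr {σ σ' : V → Bool} {e : Sym2 V} (h : ∀ v ∈ e, σ v = σ' v) :
    edgeEnergy σ e = edgeEnergy σ' e := by
  induction e using Sym2.ind with
  | _ y z => simp [edgeEnergy, h y (Sym2.mem_mk_left y z), h z (Sym2.mem_mk_right y z)]

lemma mem_union_of_mem_edge {B W : Set V} (hW : ∀ x y, G.Adj x y → x ∈ B → y ∉ B → y ∈ W)
    {e : Sym2 V} (he : e ∈ G.edgeSet) {u v : V} (hu : u ∈ e) (huB : u ∈ B) (hv : v ∈ e) :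
    v ∈ B ∪ W := by
  by_cases hvB : v ∈ B
  · exact Or.inl hvB
  have huv : u ≠ v := by rintro rfl; exact hvB huB
  rw [(Sym2.mem_and_mem_iff huv).1 ⟨hu, hv⟩, SimpleGraph.mem_edgeSet] at he
  exact Or.inr (hW u v he huB hvB)

theorem exists_isingEnergy_split [Finite V] (a b : ℝ) (B W : Set V)
    (hW : ∀ x y, G.Adj x y → x ∈ B → y ∉ B → y ∈ W) :
    ∃ H₁ H₂ : (V → Bool) → ℝ, DependsOn H₁ (B ∪ W) ∧ DependsOn H₂ Bᶜ ∧ ∀ σ,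
      a * ∑' x, spin (σ x) + b * ∑' e : G.edgeSet, edgeEnergy σ e = H₁ σ + H₂ σ := by
  set T : Set G.edgeSet := {e | ∃ v ∈ (e : Sym2 V), v ∈ B}
  refine ⟨fun σ => a * ∑' x, B.indicator (fun x => spin (σ x)) x
      + b * ∑' e, T.indicator (fun e : G.edgeSet => edgeEnergy σ e) e,
    fun σ => a * ∑' x, Bᶜ.indicator (fun x => spin (σ x)) x
      + b * ∑' e, Tᶜ.indicator (fun e : G.edgeSet => edgeEnergy σ e) e, ?_, ?_, fun σ => ?_⟩
  · refine fun σ σ' h => congrArg₂ (· + ·) (congrArg (a * ·) (tsum_congr fun x => ?_))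
      (congrArg (b * ·) (tsum_congr fun e => ?_))
    · by_cases hx : x ∈ B
      · simp [hx, h x (Or.inl hx)]
      · simp [hx]
    · by_cases he : e ∈ T
      · simp only [Set.indicator_of_mem he]
        obtain ⟨u, hu, huB⟩ := he
        exact edgeEnergy_congr fun v hv => h v (mem_union_of_mem_edge G hW e.2 hu huB hv)
      · simp [he]
  · refine fun σ σ' h => congrArg₂ (· + ·) (congrArg (a * ·) (tsum_congr fun x => ?_))
      (congrArg (b * ·) (tsum_congr fun e => ?_))
    · by_cases hx : x ∈ Bᶜ
      · simp only [Set.indicator_of_mem hx, h x hx]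
      · simp only [Set.indicator_of_notMem hx]
    · by_cases he : e ∈ Tᶜ
      · simp only [Set.indicator_of_mem he]
        exact edgeEnergy_congr fun v hv => h v fun hvB => he ⟨v, hv, hvB⟩
      · simp [he]
  · rw [add_add_add_comm, ← mul_add, ← mul_add, ← Summable.tsum_add .of_finite .of_finite,
      ← Summable.tsum_add .of_finite .of_finite]
    simp only [Set.indicator_self_add_compl_apply]

end Energy

section Walks

variable {V W : Type*} {G : SimpleGraph V} {H : SimpleGraph W} {f : V → W}

lemma exists_walk_length_le_of_adj (hf : ∀ ⦃u v⦄, G.Adj u v → f u = f v ∨ H.Adj (f u) (f v))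
    {u v : V} (p : G.Walk u v) : ∃ q : H.Walk (f u) (f v), q.length ≤ p.length := by
  induction p with
  | nil => exact ⟨.nil, le_rfl⟩
  | cons hadj p ih =>
    obtain ⟨q, hq⟩ := ih
    rcases hf hadj with h | h
    · exact ⟨q.copy h.symm rfl, by simp; omega⟩
    · exact ⟨.cons h q, by simp; omega⟩

lemma mapsTo_gball (hf : ∀ ⦃u v⦄, G.Adj u v → f u = f v ∨ H.Adj (f u) (f v)) (x : V) (r : ℕ) :
    Set.MapsTo f (gball G x r) (gball H (f x) r) := by
  rintro y ⟨hreach, hdist⟩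
  obtain ⟨p, hp⟩ := hreach.exists_walk_length_eq_dist
  obtain ⟨q, hq⟩ := exists_walk_length_le_of_adj hf p
  exact ⟨⟨q⟩, (SimpleGraph.dist_le q).trans (hq.trans (hp ▸ hdist))⟩

end Walks

section Torus

variable {d ρ r n : ℕ} {p : ℝ≥0∞} [Fact (1 ≤ p)]

lemma translate_mem_tball (x : Vtx d n) {v : Fin d → ℤ} (hv : v ∈ refBall d ρ p r) :
    (x + fun i => (v i : ZMod n)) ∈ tball d ρ p n x r := by
  have hadj : ∀ ⦃u v : Fin d → ℤ⦄, (latticeZ d ρ p).Adj u v →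
      (x + fun i => (u i : ZMod n)) = (x + fun i => (v i : ZMod n)) ∨
        (torus d ρ p n).Adj (x + fun i => (u i : ZMod n)) (x + fun i => (v i : ZMod n)) := by
    intro u v huv
    refine or_iff_not_imp_left.2 fun hne => ⟨hne, fun i => v i - u i, fun i => ?_, huv.2⟩
    simp only [Pi.add_apply, Int.cast_sub]
    ring
  simpa [tball, ← Pi.zero_def] using mapsTo_gball hadj 0 r hv

lemma dependsOn_indicator_event (η : LocalConfig d ρ p r) (x : Vtx d n) :
    DependsOn ((event d ρ p r n η x).indicator (1 : Conf d n → ℝ)) (tball d ρ p n x r) := by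
  intro σ σ' h
  have hiff : σ ∈ event d ρ p r n η x ↔ σ' ∈ event d ρ p r n η x :=
    forall_congr' fun v => by rw [h _ (translate_mem_tball x v.2)]
  by_cases hσ : σ ∈ event d ρ p r n η x
  · simp [hσ, hiff.1 hσ]
  · simp [hσ, mt hiff.2 hσ]

lemma boundary_subset_compl (B : Set (Vtx d n)) : boundary d ρ p n B ⊆ Bᶜ :=
  fun _ hy => hy.1

/-- In `C_l(l)` every ball is its own connectivity class. -/
lemma pairwise_disjoint_of_mem_tupleClass {l : ℕ} {x : Fin l → Vtx d n}
    (hx : x ∈ tupleClass d ρ p n r l l) :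
    Pairwise fun i j => Disjoint (cball d ρ p n (x i) r) (tball d ρ p n (x j) r) := by
  have hR := Relation.EqvGen.is_equivalence (stepRel d ρ p n r x)
  have hinj : Function.Injective fun i => {j | Relation.EqvGen (stepRel d ρ p n r x) i j} := by
    rw [← Set.injOn_univ]
    refine Set.injOn_of_ncard_image_eq ?_
    rw [Set.image_univ, Set.ncard_univ, Nat.card_fin]
    exact hx
  intro i j hij
  rw [Set.disjoint_iff_inter_eq_empty, ← Set.not_nonempty_iff_eq_empty]
  intro hstep
  have hij' : Relation.EqvGen (stepRel d ρ p n r x) i j := .rel _ _ hstep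
  refine hij (hinj (Set.ext fun k => ⟨fun hik => hR.trans (hR.symm hij') hik,
    fun hjk => hR.trans hij' hjk⟩))

variable (p) (a b : ℝ)

lemma weight_pos (σ : Conf d n) : 0 < weight d ρ p n a b σ := Real.exp_pos _

variable [NeZero n]

lemma prob_eq_sum (A : Set (Conf d n)) :
    prob d ρ p n a b A = (∑ σ, A.indicator (weight d ρ p n a b) σ) / partZ d ρ p n a b := by
  rw [prob, tsum_subtype, tsum_fintype]

lemma expect_eq_sum (f : Conf d n → ℝ) :
    expect d ρ p n a b f = (∑ σ, weight d ρ p n a b σ * f σ) / partZ d ρ p n a b := by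
  rw [expect, tsum_fintype]

lemma partZ_pos : 0 < partZ d ρ p n a b := by
  rw [partZ, tsum_fintype]
  exact Finset.sum_pos (fun σ _ => weight_pos p a b σ) Finset.univ_nonempty

lemma condProb_eq_condExpOn (A : Set (Conf d n)) (W : Set (Vtx d n)) (σ : Conf d n) :
    condProb d ρ p n a b A W σ = condExpOn (weight d ρ p n a b) W (A.indicator 1) σ := by
  have hagree : agreeOn d n W σ = ↑(fiber W σ) := by
    ext τ
    simp [agreeOn, mem_fiber]
  rw [condProb, prob_eq_sum, prob_eq_sum, div_div_div_cancel_right₀ (partZ_pos p a b).ne',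
    hagree, Set.inter_comm, ← Set.indicator_indicator,
    Finset.sum_indicator_subset _ (Finset.subset_univ _),
    Finset.sum_indicator_subset _ (Finset.subset_univ _), condExpOn,
    Finset.sum_congr rfl fun τ _ => indicator_eq_mul_indicator_one A _ τ]

lemma weight_factors (B : Set (Vtx d n)) :
    ∃ f g : Conf d n → ℝ, weight d ρ p n a b = f * g ∧
      DependsOn f (B ∪ boundary d ρ p n B) ∧ DependsOn g Bᶜ := by
  obtain ⟨H₁, H₂, h₁, h₂, hH⟩ := exists_isingEnergy_split (torus d ρ p n) a b B
    (boundary d ρ p n B) fun x y hxy hx hy => ⟨hy, x, hx, hxy⟩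
  refine ⟨fun σ => Real.exp (H₁ σ), fun σ => Real.exp (H₂ σ), funext fun σ => ?_,
    fun σ σ' h => by simp only [h₁ h], fun σ σ' h => by simp only [h₂ h]⟩
  rw [Pi.mul_apply, ← Real.exp_add, ← hH]
  rfl

end Torus

theorem stmt_14_general
    (d ρ r l n : ℕ) (p : ℝ≥0∞) [Fact (1 ≤ p)]
    (hn : 2 * ρ * l * (2 * r + 1) < n)
    (a b : ℝ) (η : LocalConfig d ρ p r)
    (x : Fin l → Vtx d n) (hx : x ∈ tupleClass d ρ p n r l l) :
    prob d ρ p n a b {σ | ∀ i : Fin l, occursAt d ρ p r n η (x i) σ}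
      = expect d ρ p n a b (fun σ =>
          ∏ i : Fin l,
            condProb d ρ p n a b (event d ρ p r n η (x i))
              (boundary d ρ p n (tball d ρ p n (x i) r)) σ) := by
  have : NeZero n := ⟨by omega⟩
  have hinter : {σ | ∀ i : Fin l, occursAt d ρ p r n η (x i) σ}
      = ⋂ i, event d ρ p r n η (x i) := by
    ext σ
    simp [event]
  have hprod : ∀ σ, (⋂ i, event d ρ p r n η (x i)).indicator (weight d ρ p n a b) σ
      = weight d ρ p n a b σ * ∏ i, (event d ρ p r n η (x i)).indicator 1 σ := fun σ => by
    rw [prod_indicator_const_apply, indicator_eq_mul_indicator_one]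
    simp
  rw [prob_eq_sum, expect_eq_sum, hinter]
  simp_rw [hprod, condProb_eq_condExpOn]
  congr 1
  exact (sum_mul_prod_condExpOn (weight_pos p a b) (fun i => weight_factors p a b _)
    (fun i => boundary_subset_compl _) (pairwise_disjoint_of_mem_tupleClass hx)
    (fun i => dependsOn_indicator_event η (x i))).symm

/-- **Markov factorization over disconnected balls.**  For any reals `a, b`, any `η ∈ D_r`
and any `l`-tuple `(x_1, …, x_l) ∈ C_l(l)`,
`μ_{a,b}(I_{x_1}^η = 1, …, I_{x_l}^η = 1)
  = E_{a,b}[∏_i μ_{a,b}(I_{x_i}^η = 1 | ·_{δB(x_i,r)})]`. -/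
theorem stmt_14
    (d ρ r l n : ℕ) (hd : 1 ≤ d) (hρ : 1 ≤ ρ) (hl : 1 ≤ l) (p : ℝ≥0∞) [Fact (1 ≤ p)]
    (hn : 2 * ρ * l * (2 * r + 1) < n)
    (a b : ℝ) (η : LocalConfig d ρ p r)
    (x : Fin l → Vtx d n) (hx : x ∈ tupleClass d ρ p n r l l) :
    prob d ρ p n a b {σ | ∀ i : Fin l, occursAt d ρ p r n η (x i) σ}
      = expect d ρ p n a b (fun σ =>
          ∏ i : Fin l,
            condProb d ρ p n a b (event d ρ p r n η (x i))
              (boundary d ρ p n (tball d ρ p n (x i) r)) σ) :=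
  stmt_14_general d ρ r l n p hn a b η x hx

end

end Ising
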